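/- Let k, m, n be positive integers, let π = (P_1,...,P_m) be a partition of [n] in which each P_i is a set of |P_i| consecutive integers, and let s = (s_1,...,s_m) be a vector of positive integers with k ≤ s_1 + ... + s_m. If X ∈ {+1, 0, −1}^n is nonzero and alt_I(X) ≥ M_{2,π} (where I is the identity permutation), then the set X^{+1} = {i : x_i = +1} or the set X^{−1} = {i : x_i = −1} contains a k-subset A of [n] with |A ∩ P_i| ≤ s_i for all i, i.e. a vertex of KG^2(π; s; k). -/

import Mathlib

/-!
Take an alternating subsequence of maximal length `ℓ ≥ M_{2,π}`, with `r_i` of its entries in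
`P i`. Since `P i` is an interval, these entries are consecutive in the subsequence, so each sign
occurs at least `⌊r_i / 2⌋` times among them. If `∑ min(r_i, 2 s_i) < 2k - 1`, the blocks with
`r_i > f_{2,π}(P i)` (for which `f_{2,π}(P i) = 2 s_i`) form an admissible selection in the
definition of `M_{2,π}` whose value exceeds `∑ r_i = ℓ`. Hence `∑ min(r_i, 2 s_i) ≥ 2k - 1`;
splitting each block between the two signs, some sign `b` with `c_i` entries of sign `b` in `P i`
has `∑ min(c_i, s_i) ≥ k`, and taking up to `s_i` of these entries from each block gives the vertex.
-/

open Finset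

/-- A proper `t`-coloring of the Kneser hypergraph `KG^r(F)`: vertices are the members of `F`,
colors are taken in `{1,...,t}`, and no set of `r` pairwise disjoint members of `F`
(an edge) is monochromatic. -/
def IsKneserColoring (n r t : ℕ) (F : Finset (Finset (Fin n)))
    (c : Finset (Fin n) → ℕ) : Prop :=
  (∀ A ∈ F, c A ∈ Finset.Icc 1 t) ∧
    ∀ E : Finset (Finset (Fin n)), E ⊆ F → E.card = r →
      ((E : Set (Finset (Fin n))).Pairwise fun A B => Disjoint A B) →
      ¬ ∃ i, ∀ A ∈ E, c A = i

/-- The chromatic number of the Kneser hypergraph `KG^r(F)`. -/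
noncomputable def kneserChrom (n r : ℕ) (F : Finset (Finset (Fin n))) : ℕ :=
  sInf {t | ∃ c, IsKneserColoring n r t F c}

/-- `P` is a partition of `[n]` (identified with `Fin n`) into `m` blocks. -/
def IsPartition (n m : ℕ) (P : Fin m → Finset (Fin n)) : Prop :=
  (∀ i, (P i).Nonempty) ∧ (∀ i j, i ≠ j → Disjoint (P i) (P j)) ∧
    ∀ a : Fin n, ∃ i, a ∈ P i

open Classical in
/-- The vertex set of the multiple Kneser hypergraph `KG^r(π; s; k)`:
all `k`-subsets `A` of `[n]` with `|A ∩ P i| ≤ s i` for all `i`. -/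
noncomputable def multiKneserVerts (n m k : ℕ) (P : Fin m → Finset (Fin n))
    (s : Fin m → ℕ) : Finset (Finset (Fin n)) :=
  Finset.univ.filter fun A => A.card = k ∧ ∀ i, (A ∩ P i).card ≤ s i

/-- `f_{r,π}(P i) = r * s i` if `|P i| ≥ r * s i`, and `|P i|` otherwise. -/
def frpi (n m r : ℕ) (P : Fin m → Finset (Fin n)) (s : Fin m → ℕ) (i : Fin m) : ℕ :=
  if r * s i ≤ (P i).card then r * s i else (P i).card

/-- `M_{r,π}`: the maximum, over all subsets `S ⊆ [m]` with
`∑_{i ∈ S} f_{r,π}(P i) ≤ rk - 1`, of `rk - 1 + ∑_{i ∈ S} (|P i| - f_{r,π}(P i))`. -/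
noncomputable def Mrpi (n m r k : ℕ) (P : Fin m → Finset (Fin n)) (s : Fin m → ℕ) : ℕ :=
  sSup {v | ∃ S : Finset (Fin m), (∑ i ∈ S, frpi n m r P s i) ≤ r * k - 1 ∧
    v = r * k - 1 + ∑ i ∈ S, ((P i).card - frpi n m r P s i)}

/-- `l` is (the index list of) an alternating subsequence of `(X 1, ..., X n)`:
indices are increasing, all chosen entries are nonzero (`≠ none`), and any two
consecutive chosen entries differ. -/
def IsAltList {α : Type*} (n : ℕ) (X : Fin n → Option α) (l : List (Fin n)) : Prop :=
  l.Chain' (· < ·) ∧ (∀ i ∈ l, X i ≠ none) ∧ l.Chain' (fun i j => X i ≠ X j)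

/-- `alt_I(X)`: maximum length of an alternating subsequence of nonzero entries of
`(X 1, ..., X n)` (with respect to the identity permutation). -/
noncomputable def altVecI {α : Type*} (n : ℕ) (X : Fin n → Option α) : ℕ :=
  sSup {k | ∃ l : List (Fin n), IsAltList n X l ∧ l.length = k}

open Function

namespace List

variable {α : Type*} [Preorder α]

/-- A sorted list enters and leaves an order-connected set only once, so the elements it keeps
there are consecutive in the list. -/
theorem IsChain.filter_of_ordConnected {R : α → α → Prop} {p : α → Bool}
    (hp : Set.OrdConnected {x | p x}) :
    ∀ {l : List α}, l.IsChain (· < ·) → l.IsChain R → (l.filter p).IsChain R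
  | [], _, _ => by simp
  | [a], _, _ => by by_cases ha : p a <;> simp [ha]
  | a :: c :: t, hlt, hR => by
    have ih : ((c :: t).filter p).IsChain R :=
      IsChain.filter_of_ordConnected hp hlt.tail hR.tail
    by_cases hpa : p a
    · rw [filter_cons_of_pos hpa]
      by_cases hpc : p c
      · rw [filter_cons_of_pos hpc] at ih ⊢
        exact ih.cons_cons (isChain_cons_cons.1 hR).1
      · have hac : a < c := (isChain_cons_cons.1 hlt).1
        have hct : ∀ b ∈ t, c < b :=
          (pairwise_cons.1 (isChain_iff_pairwise.1 hlt.tail)).1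
        have hnil : t.filter p = [] := filter_eq_nil_iff.2 fun b hb hpb =>
          hpc (hp.out hpa hpb ⟨hac.le, (hct b hb).le⟩)
        simp [filter_cons_of_neg hpc, hnil]
    · rwa [filter_cons_of_neg hpa]

end List

section AltList

variable {α : Type*} {n : ℕ} {X : Fin n → Option α} {l : List (Fin n)}

theorem IsAltList.nodup (h : IsAltList n X l) : l.Nodup :=
  (List.isChain_iff_pairwise.1 h.1).imp ne_of_lt

theorem IsAltList.filter (h : IsAltList n X l) {p : Fin n → Bool}
    (hp : Set.OrdConnected {x | p x}) : IsAltList n X (l.filter p) :=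
  ⟨List.IsChain.filter_of_ordConnected hp h.1 h.1,
    fun a ha => h.2.1 a (List.mem_of_mem_filter ha),
    List.IsChain.filter_of_ordConnected hp h.1 h.2.2⟩

theorem exists_isAltList_length_eq_altVecI (X : Fin n → Option α) :
    ∃ l, IsAltList n X l ∧ l.length = altVecI n X := by
  have hne : {k | ∃ l, IsAltList n X l ∧ l.length = k}.Nonempty :=
    ⟨0, [], ⟨List.IsChain.nil, by simp, List.IsChain.nil⟩, rfl⟩
  have hbdd : BddAbove {k | ∃ l, IsAltList n X l ∧ l.length = k} := by
    refine ⟨n, ?_⟩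
    rintro _ ⟨l, hl, rfl⟩
    simpa using hl.nodup.length_le_card
  exact Nat.sSup_mem hne hbdd

end AltList

section Signs

variable {n : ℕ} {X : Fin n → Option Bool} {l : List (Fin n)}

theorem IsAltList.exists_signs (h : IsAltList n X l) :
    ∃ σ : Fin n → Bool, (∀ a ∈ l, X a = some (σ a)) ∧ (l.map σ).IsChain (· ≠ ·) := by
  refine ⟨fun a => (X a).getD false, fun a ha => ?_, ?_⟩
  · obtain ⟨b, hb⟩ := Option.ne_none_iff_exists'.1 (h.2.1 a ha)
    simp [hb]
  · rw [List.isChain_map]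
    refine h.2.2.imp_of_mem_imp fun a b ha hb hab => ?_
    obtain ⟨x, hx⟩ := Option.ne_none_iff_exists'.1 (h.2.1 a ha)
    obtain ⟨y, hy⟩ := Option.ne_none_iff_exists'.1 (h.2.1 b hb)
    simpa [hx, hy] using hab

theorem IsAltList.card_sub_one_le_two_mul_card_filter (h : IsAltList n X l) (b : Bool) :
    #l.toFinset - 1 ≤ 2 * #{a ∈ l.toFinset | X a = some b} := by
  obtain ⟨σ, hσ, hchain⟩ := h.exists_signs
  have hcount : #{a ∈ l.toFinset | X a = some b} = (l.map σ).count b := by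
    rw [List.count_eq_countP, List.countP_map, List.countP_eq_length_filter,
      ← List.toFinset_card_of_nodup (h.nodup.filter _), List.toFinset_filter]
    refine congrArg card (filter_congr fun a ha => ?_)
    simp [hσ a (List.mem_toFinset.1 ha)]
  rw [List.toFinset_card_of_nodup h.nodup, hcount]
  simpa using hchain.length_sub_one_le_two_mul_count_bool b

theorem IsAltList.card_filter_true_add_card_filter_false (h : IsAltList n X l) :
    #{a ∈ l.toFinset | X a = some true} + #{a ∈ l.toFinset | X a = some false} =
      #l.toFinset := by
  rw [← card_union_of_disjoint (disjoint_filter.2 fun a _ h1 h2 => by simp_all), ← filter_or]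
  refine congrArg card (filter_true_of_mem fun a ha => ?_)
  obtain ⟨b, hb⟩ := Option.ne_none_iff_exists'.1 (h.2.1 a (List.mem_toFinset.1 ha))
  cases b <;> simp [hb]

theorem IsAltList.min_card_le_min_card_filter_add (h : IsAltList n X l) (q : ℕ) :
    min #l.toFinset (2 * q) ≤
      min #{a ∈ l.toFinset | X a = some true} q + min #{a ∈ l.toFinset | X a = some false} q := by
  have := h.card_sub_one_le_two_mul_card_filter true
  have := h.card_sub_one_le_two_mul_card_filter false
  have := h.card_filter_true_add_card_filter_false
  omega

end Signs

section Mrpi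

variable {n m r k : ℕ} {P : Fin m → Finset (Fin n)} {s : Fin m → ℕ}

theorem frpi_eq_min (i : Fin m) : frpi n m r P s i = min (r * s i) #(P i) := by
  unfold frpi
  split <;> omega

theorem le_Mrpi {S : Finset (Fin m)} (hS : ∑ i ∈ S, frpi n m r P s i ≤ r * k - 1) :
    r * k - 1 + ∑ i ∈ S, (#(P i) - frpi n m r P s i) ≤ Mrpi n m r k P s := by
  refine le_csSup ⟨r * k - 1 + ∑ i, #(P i), ?_⟩ ⟨S, hS, rfl⟩
  rintro _ ⟨T, -, rfl⟩
  gcongr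
  exact (sum_le_sum fun i _ => Nat.sub_le _ _).trans (sum_le_sum_of_subset (subset_univ T))

theorem mul_sub_one_le_sum_min_of_Mrpi_le {c : Fin m → ℕ} (hc : ∀ i, c i ≤ #(P i))
    (hM : Mrpi n m r k P s ≤ ∑ i, c i) : r * k - 1 ≤ ∑ i, min (c i) (r * s i) := by
  by_contra! hlt
  have hf (i : Fin m) : frpi n m r P s i = min (r * s i) #(P i) := frpi_eq_min i
  set S : Finset (Fin m) := {i | frpi n m r P s i < c i}
  have hSadm : ∑ i ∈ S, frpi n m r P s i ≤ r * k - 1 := calc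
    ∑ i ∈ S, frpi n m r P s i = ∑ i ∈ S, min (c i) (r * s i) := sum_congr rfl fun i hi => by
      have := (mem_filter.1 hi).2
      have := hc i
      have := hf i
      omega
    _ ≤ ∑ i, min (c i) (r * s i) := sum_le_sum_of_subset (subset_univ S)
    _ ≤ r * k - 1 := hlt.le
  have hcS : ∀ i, c i ≤ (if i ∈ S then #(P i) - frpi n m r P s i else 0) + min (c i) (r * s i) := by
    intro i
    have := hc i
    have := hf i
    by_cases hi : i ∈ S
    · have := (mem_filter.1 hi).2
      rw [if_pos hi]
      omega
    · have : ¬ frpi n m r P s i < c i := fun h => hi (mem_filter.2 ⟨mem_univ i, h⟩)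
      rw [if_neg hi]
      omega
  have hsum := calc
    ∑ i, c i ≤ ∑ i, ((if i ∈ S then #(P i) - frpi n m r P s i else 0) + min (c i) (r * s i)) :=
      sum_le_sum fun i _ => hcS i
    _ = ∑ i ∈ S, (#(P i) - frpi n m r P s i) + ∑ i, min (c i) (r * s i) := by
      rw [sum_add_distrib, sum_ite_mem, univ_inter]
  have := le_Mrpi hSadm
  omega

end Mrpi

section Partition

variable {n m : ℕ} {P : Fin m → Finset (Fin n)}

theorem sum_card_inter_eq_card (hdisj : Pairwise (Disjoint on P)) (hcov : ∀ a, ∃ i, a ∈ P i)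
    (L : Finset (Fin n)) : ∑ i, #(L ∩ P i) = #L := by
  rw [← card_biUnion fun i _ j _ hij =>
    (hdisj hij).mono inter_subset_right inter_subset_right]
  congr 1
  ext a
  simpa using fun _ => hcov a

theorem exists_subset_mem_multiKneserVerts (hdisj : Pairwise (Disjoint on P)) {k : ℕ}
    {s : Fin m → ℕ} {Y : Finset (Fin n)} (hY : k ≤ ∑ i, min #(Y ∩ P i) (s i)) :
    ∃ A ⊆ Y, A ∈ multiKneserVerts n m k P s := by
  choose B hBY hBcard using fun i => exists_subset_card_eq (min_le_left #(Y ∩ P i) (s i))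
  have hBdisj : ((univ : Finset (Fin m)) : Set (Fin m)).PairwiseDisjoint B := fun i _ j _ hij =>
    (hdisj hij).mono ((hBY i).trans inter_subset_right) ((hBY j).trans inter_subset_right)
  obtain ⟨A, hAB, hAcard⟩ := exists_subset_card_eq (s := univ.biUnion B) (n := k)
    (by rwa [card_biUnion hBdisj, sum_congr rfl fun i _ => hBcard i])
  refine ⟨A, hAB.trans (biUnion_subset.2 fun i _ => (hBY i).trans inter_subset_left), ?_⟩
  refine mem_filter.2 ⟨mem_univ A, hAcard, fun i => ?_⟩
  have hAi : A ∩ P i ⊆ B i := by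
    intro a ha
    obtain ⟨j, -, hj⟩ := mem_biUnion.1 (hAB (mem_inter.1 ha).1)
    obtain rfl | hji := eq_or_ne j i
    · exact hj
    · exact absurd (mem_inter.1 ha).2
        (disjoint_left.1 (hdisj hji) (inter_subset_right ((hBY j) hj)))
  calc #(A ∩ P i) ≤ #(B i) := card_le_card hAi
    _ ≤ s i := (hBcard i).trans_le (min_le_right _ _)

end Partition

theorem stmt9_general (n m k : ℕ)
    (P : Fin m → Finset (Fin n)) (hP : IsPartition n m P)
    (hPconsec : ∀ i, ∀ x ∈ P i, ∀ y ∈ P i, ∀ z : Fin n, x ≤ z → z ≤ y → z ∈ P i)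
    (s : Fin m → ℕ)
    (X : Fin n → Option Bool)
    (halt : Mrpi n m 2 k P s ≤ altVecI n X) :
    ∃ A ∈ multiKneserVerts n m k P s,
      (∀ a ∈ A, X a = some true) ∨ ∀ a ∈ A, X a = some false := by
  obtain ⟨-, hdisj, hcov⟩ := hP
  obtain ⟨l, hl, hlen⟩ := exists_isAltList_length_eq_altVecI X
  set L := l.toFinset
  set Y : Bool → Finset (Fin n) := fun b => {a ∈ L | X a = some b}
  have hblock (i : Fin m) :
      min #(L ∩ P i) (2 * s i) ≤ min #(Y true ∩ P i) (s i) + min #(Y false ∩ P i) (s i) := by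
    have hconv : Set.OrdConnected {x | decide (x ∈ P i) = true} := ⟨fun x hx y hy z hz => by
      simp only [Set.mem_ofPred_eq, decide_eq_true_eq] at hx hy ⊢
      exact hPconsec i x hx y hy z hz.1 hz.2⟩
    simpa [L, Y, List.toFinset_filter, filter_mem_eq_inter, filter_inter] using
      (hl.filter hconv).min_card_le_min_card_filter_add (s i)
  have hkey : 2 * k - 1 ≤ ∑ i, min #(L ∩ P i) (2 * s i) := by
    refine mul_sub_one_le_sum_min_of_Mrpi_le (fun i => card_le_card inter_subset_right) ?_
    rwa [sum_card_inter_eq_card hdisj hcov, List.toFinset_card_of_nodup hl.nodup, hlen]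
  obtain ⟨b, hb⟩ : ∃ b, k ≤ ∑ i, min #(Y b ∩ P i) (s i) := by
    have := hkey.trans ((sum_le_sum fun i _ => hblock i).trans_eq sum_add_distrib)
    by_contra! h
    have := h true
    have := h false
    omega
  obtain ⟨A, hAY, hA⟩ := exists_subset_mem_multiKneserVerts hdisj hb
  have hAX : ∀ a ∈ A, X a = some b := fun a ha => (mem_filter.1 (hAY ha)).2
  cases b
  · exact ⟨A, hA, Or.inr hAX⟩
  · exact ⟨A, hA, Or.inl hAX⟩

/-- Here a vector `X ∈ {+1, 0, -1}^n` is modelled as `X : Fin n → Option Bool`, with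
`some true` standing for `+1`, `some false` for `-1`, and `none` for `0`. -/
theorem stmt9 (n m k : ℕ) (hn : 1 ≤ n) (hm : 1 ≤ m) (hk : 1 ≤ k)
    (P : Fin m → Finset (Fin n)) (hP : IsPartition n m P)
    (hPconsec : ∀ i, ∀ x ∈ P i, ∀ y ∈ P i, ∀ z : Fin n, x ≤ z → z ≤ y → z ∈ P i)
    (s : Fin m → ℕ) (hs : ∀ i, 1 ≤ s i) (hks : k ≤ ∑ i, s i)
    (X : Fin n → Option Bool) (hX0 : ∃ a, X a ≠ none)
    (halt : Mrpi n m 2 k P s ≤ altVecI n X) :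
    ∃ A ∈ multiKneserVerts n m k P s,
      (∀ a ∈ A, X a = some true) ∨ ∀ a ∈ A, X a = some false :=
  stmt9_general n m k P hP hPconsec s X halt
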